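/- Define T(s) = (4/(1-s)²)·(Γ(1+s)/Γ(1-s))³·(Γ(1-2s)/Γ(1+2s))·(Γ(3/2-s/2)/Γ(1/2+s/2))². Then T(0) = 1 and for all s ∈ [0, 1/38], T(s) ≤ 1 + (7/2)s. -/

import Mathlib

noncomputable def T (s : ℝ) : ℝ :=
  4 / (1 - s) ^ 2 * (Real.Gamma (1 + s) / Real.Gamma (1 - s)) ^ 3 *
    (Real.Gamma (1 - 2 * s) / Real.Gamma (1 + 2 * s)) *
    (Real.Gamma (3 / 2 - s / 2) / Real.Gamma (1 / 2 + s / 2)) ^ 2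

/-! Reflection and duplication turn `T s` into
`(Γ(1+s) Γ(1+s/2)² / Γ(1+2s))² · (sin πs / πs)² · 2^{4s} / (cos πs · cos²(πs/2))`.
The first factor is at most `1` by log-convexity of `Γ` between `1` and `1 + 2s`, the second
since `sin x ≤ x`; what remains is elementary: `2^{4s} ≤ 1 / (1 - 4s log 2)` and
`cos x · cos²(x/2) ≥ 1 - 3x²/4`. -/

open Real

namespace Real

theorem Gamma_one_add_mul_Gamma_one_add_half_sq_le {s : ℝ} (hs : -1 / 2 < s) :
    Gamma (1 + s) * Gamma (1 + s / 2) ^ 2 ≤ Gamma (1 + 2 * s) := by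
  have ht : 0 < 1 + 2 * s := by linarith
  have hC : 0 ≤ Gamma (1 + 2 * s) := (Gamma_pos_of_pos ht).le
  have interp {a : ℝ} (ha₀ : 0 < a) (ha₁ : a < 1) :
      Gamma (1 + a * (2 * s)) ≤ Gamma (1 + 2 * s) ^ a := by
    have h := Gamma_mul_add_mul_le_rpow_Gamma_mul_rpow_Gamma one_pos ht (sub_pos.2 ha₁) ha₀
      (sub_add_cancel 1 a)
    rwa [Gamma_one, one_rpow, one_mul, show (1 - a) * 1 + a * (1 + 2 * s) = 1 + a * (2 * s) by
      ring] at h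
  calc Gamma (1 + s) * Gamma (1 + s / 2) ^ 2
      = Gamma (1 + 1 / 2 * (2 * s)) * Gamma (1 + 1 / 4 * (2 * s)) ^ 2 := by ring_nf
    _ ≤ Gamma (1 + 2 * s) ^ (1 / 2 : ℝ) * (Gamma (1 + 2 * s) ^ (1 / 4 : ℝ)) ^ 2 := by
        have hB : 0 ≤ Gamma (1 + 1 / 4 * (2 * s)) := (Gamma_pos_of_pos (by linarith)).le
        gcongr
        · exact interp (by norm_num) (by norm_num)
        · exact interp (by norm_num) (by norm_num)
    _ = Gamma (1 + 2 * s) := by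
        rw [← rpow_natCast, ← rpow_mul hC, ← rpow_add' hC (by norm_num)]
        norm_num

theorem Gamma_one_add_mul_Gamma_one_sub {s : ℝ} (hs : s ≠ 0) :
    Gamma (1 + s) * Gamma (1 - s) = π * s / sin (π * s) := by
  rw [add_comm, Gamma_add_one hs, mul_assoc, Gamma_mul_Gamma_one_sub]
  ring

theorem Gamma_half_add_mul_Gamma_half_sub (x : ℝ) :
    Gamma (1 / 2 + x) * Gamma (1 / 2 - x) = π / cos (π * x) := by
  have h := Gamma_mul_Gamma_one_sub (1 / 2 + x)
  rwa [show 1 - (1 / 2 + x) = 1 / 2 - x by ring, show π * (1 / 2 + x) = π * x + π / 2 by ring,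
    sin_add_pi_div_two] at h

theorem Gamma_half_add_half_mul_Gamma_one_add_half (s : ℝ) :
    Gamma (1 / 2 + s / 2) * Gamma (1 + s / 2) = Gamma (1 + s) * 2 ^ (-s) * √π := by
  have h := Gamma_mul_Gamma_add_half (1 / 2 + s / 2)
  rwa [show 1 / 2 + s / 2 + 1 / 2 = 1 + s / 2 by ring, show 2 * (1 / 2 + s / 2) = 1 + s by ring,
    show 1 - (1 + s) = -s by ring] at h

theorem one_sub_three_div_four_mul_sq_le_cos_mul_cos_half_sq {x : ℝ} (hx : x ^ 2 ≤ 2) :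
    1 - 3 / 4 * x ^ 2 ≤ cos x * cos (x / 2) ^ 2 := by
  have hc := one_sub_sq_div_two_le_cos (x := x)
  rw [cos_sq, show 2 * (x / 2) = x by ring]
  nlinarith [sq_nonneg x]

end Real

theorem T_zero : T 0 = 1 := by
  have h : Gamma (3 / 2) = 1 / 2 * Gamma (1 / 2) := by
    rw [show (3 : ℝ) / 2 = 1 / 2 + 1 by norm_num, Gamma_add_one (by norm_num)]
  have hne : Gamma (1 / 2) ≠ 0 := (Gamma_pos_of_pos one_half_pos).ne'
  unfold T
  norm_num [Gamma_one, h]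
  field_simp
  ring

theorem T_eq_of_pos_of_lt_half {s : ℝ} (hs₀ : 0 < s) (hs₁ : s < 1 / 2) :
    T s = (Gamma (1 + s) * Gamma (1 + s / 2) ^ 2 / Gamma (1 + 2 * s)) ^ 2 *
      (sin (π * s) / (π * s)) ^ 2 * (2 ^ s) ^ 4 / (cos (π * s) * cos (π * s / 2) ^ 2) := by
  have hπs : 0 < π * s := by positivity
  have hπs₁ : π * s < π / 2 := by nlinarith [pi_pos]
  have hcos : 0 < cos (π * s) := cos_pos_of_mem_Ioo ⟨by linarith, hπs₁⟩
  have hcos₂ : 0 < cos (π * s / 2) := cos_pos_of_mem_Ioo ⟨by linarith, by linarith⟩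
  have hΓ₂ : 0 < Gamma (1 + 2 * s) := Gamma_pos_of_pos (by linarith)
  have hΓ₃ : 0 < Gamma (1 / 2 + s / 2) := Gamma_pos_of_pos (by linarith)
  have e₁ : Gamma (1 - s) = π * s / (sin (π * s) * Gamma (1 + s)) := by
    have h := Gamma_one_add_mul_Gamma_one_sub hs₀.ne'
    field_simp at h ⊢
    linear_combination h
  have e₂ : Gamma (1 - 2 * s) = π * s / (sin (π * s) * cos (π * s) * Gamma (1 + 2 * s)) := by
    have h := Gamma_one_add_mul_Gamma_one_sub (mul_pos two_pos hs₀).ne'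
    rw [show π * (2 * s) = 2 * (π * s) by ring, sin_two_mul] at h
    field_simp at h ⊢
    linear_combination h
  have e₃ : Gamma (3 / 2 - s / 2) =
      (1 - s) * π / (2 * cos (π * s / 2) * Gamma (1 / 2 + s / 2)) := by
    have h := Gamma_half_add_mul_Gamma_half_sub (s / 2)
    rw [mul_div_assoc', eq_div_iff hcos₂.ne'] at h
    rw [show 3 / 2 - s / 2 = 1 / 2 - s / 2 + 1 by ring, Gamma_add_one (by linarith),
      eq_div_iff (by positivity)]
    linear_combination (1 - s) * h
  have e₄ : Gamma (1 / 2 + s / 2) = Gamma (1 + s) * √π / (2 ^ s * Gamma (1 + s / 2)) := by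
    have h := Gamma_half_add_half_mul_Gamma_one_add_half s
    rw [rpow_neg two_pos.le] at h
    field_simp at h ⊢
    linear_combination h
  have h1s : 1 - s ≠ 0 := by linarith
  unfold T
  rw [e₁, e₂, e₃, e₄]
  field_simp
  rw [show √π ^ 4 = (√π ^ 2) ^ 2 by ring, sq_sqrt pi_pos.le]
  ring

theorem T_le_two_rpow_pow_four_div {s : ℝ} (hs₀ : 0 < s) (hs₁ : s < 1 / 2) :
    T s ≤ ((2 : ℝ) ^ s) ^ 4 / (cos (π * s) * cos (π * s / 2) ^ 2) := by
  have hπs : 0 < π * s := by positivity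
  have hΓ : 0 < Gamma (1 + 2 * s) := Gamma_pos_of_pos (by linarith)
  have hR₀ : 0 ≤ Gamma (1 + s) * Gamma (1 + s / 2) ^ 2 / Gamma (1 + 2 * s) := by
    have := Gamma_pos_of_pos (show 0 < 1 + s by linarith)
    positivity
  have hR₁ : Gamma (1 + s) * Gamma (1 + s / 2) ^ 2 / Gamma (1 + 2 * s) ≤ 1 :=
    div_le_one_of_le₀ (Gamma_one_add_mul_Gamma_one_add_half_sq_le (by linarith)) hΓ.le
  have hsinc₀ : 0 ≤ sin (π * s) / (π * s) :=
    div_nonneg (sin_nonneg_of_nonneg_of_le_pi hπs.le (by nlinarith [pi_pos])) hπs.le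
  have hsinc₁ : sin (π * s) / (π * s) ≤ 1 := div_le_one_of_le₀ (sin_le hπs.le) hπs.le
  have hD : 0 < cos (π * s) * cos (π * s / 2) ^ 2 := by
    have hπs₁ : π * s < π / 2 := by nlinarith [pi_pos]
    have := cos_pos_of_mem_Ioo ⟨by linarith, hπs₁⟩
    have := cos_pos_of_mem_Ioo (x := π * s / 2) ⟨by linarith, by linarith⟩
    positivity
  rw [T_eq_of_pos_of_lt_half hs₀ hs₁]
  refine div_le_div_of_nonneg_right ?_ hD.le
  exact mul_le_of_le_one_left (by positivity)
    (mul_le_one₀ (pow_le_one₀ hR₀ hR₁) (by positivity) (pow_le_one₀ hsinc₀ hsinc₁))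

theorem two_rpow_pow_four_le {s : ℝ} (hs₀ : 0 ≤ s) (hs₁ : s ≤ 1 / 38) :
    ((2 : ℝ) ^ s) ^ 4 ≤ (1 + 7 / 2 * s) * (1 - 3 / 4 * (π * s) ^ 2) := by
  have hlog := log_two_lt_d9
  have hx₁ : 4 * log 2 * s < 1 := by nlinarith
  have hπs : 3 / 4 * (π * s) ^ 2 ≤ s / 5 := by
    have hπ : π ^ 2 ≤ 10 := by nlinarith [pi_lt_d2, pi_pos]
    nlinarith [mul_le_mul_of_nonneg_right hπ (sq_nonneg s)]
  have hexp : ((2 : ℝ) ^ s) ^ 4 = exp (4 * log 2 * s) := by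
    rw [rpow_def_of_pos two_pos, ← exp_nat_mul]; ring_nf
  rw [hexp]
  refine (exp_bound_div_one_sub_of_interval (by positivity [log_pos one_lt_two]) hx₁).trans ?_
  rw [div_le_iff₀ (sub_pos.2 hx₁)]
  calc (1 : ℝ)
      ≤ (1 + 7 / 2 * s) * (1 - s / 5) * (1 - 0.6931471808 * 4 * s) := by
        nlinarith [mul_nonneg hs₀ (sub_nonneg.2 hs₁), pow_nonneg hs₀ 3]
    _ ≤ (1 + 7 / 2 * s) * (1 - 3 / 4 * (π * s) ^ 2) * (1 - 4 * log 2 * s) := by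
        have hfac : 0 ≤ 1 - 3 / 4 * (π * s) ^ 2 := by linarith
        exact mul_le_mul (mul_le_mul_of_nonneg_left (by linarith) (by positivity))
          (by nlinarith) (by norm_num; linarith) (by positivity)

theorem T_bound : T 0 = 1 ∧ ∀ s ∈ Set.Icc (0 : ℝ) (1 / 38), T s ≤ 1 + 7 / 2 * s := by
  refine ⟨T_zero, fun s ⟨hs₀, hs₁⟩ => ?_⟩
  rcases hs₀.eq_or_lt with rfl | hs₀
  · simp [T_zero]
  have hπs : (π * s) ^ 2 ≤ 1 := by
    rw [sq_le_one_iff_abs_le_one, abs_of_pos (by positivity)]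
    nlinarith [pi_lt_d2]
  have hcos := one_sub_three_div_four_mul_sq_le_cos_mul_cos_half_sq (x := π * s) (by linarith)
  have hD : 0 < cos (π * s) * cos (π * s / 2) ^ 2 := by linarith
  calc T s ≤ ((2 : ℝ) ^ s) ^ 4 / (cos (π * s) * cos (π * s / 2) ^ 2) :=
        T_le_two_rpow_pow_four_div hs₀ (by linarith)
    _ ≤ (1 + 7 / 2 * s) * (1 - 3 / 4 * (π * s) ^ 2) / (cos (π * s) * cos (π * s / 2) ^ 2) := by
        gcongr
        exact two_rpow_pow_four_le hs₀.le hs₁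
    _ ≤ 1 + 7 / 2 * s := by
        rw [div_le_iff₀ hD]
        gcongr
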